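/- For any report profile θ', the expected revenue of PDA over the uniformly random order equals the seller's Shapley contribution minus the expected welfare loss from unsold items: E_PDA(Rev(θ')) = φ_s(θ') − (1/|O(V)|) · Σ_{o ∈ O(V)} (SW*(θ', V, π^o) − SW(θ', π^o)), where π^o is the final allocation produced by PDA under order o. -/

import Mathlib

namespace DA

open scoped Classical

/-- A report profile for selling `k` homogeneous items: each agent reports a
valuation over quantities `0, …, k` and a set of neighbors. -/
structure Profile (V : Type*) (k : ℕ) where
  val : V → ℕ → ℝ
  nbr : V → Set V

/-- A valuation is valid if it is normalized (`v 0 = 0`) and has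
non-increasing marginals on `{0, …, k}`. -/
def ValidVal (k : ℕ) (v : ℕ → ℝ) : Prop :=
  v 0 = 0 ∧ ∀ q : ℕ, q + 2 ≤ k → v (q + 2) - v (q + 1) ≤ v (q + 1) - v q

variable {V : Type*}

/-- A profile is valid (w.r.t. seller `s`) if every buyer's valuation is valid. -/
def Profile.Valid {k : ℕ} (θ : Profile V k) (s : V) : Prop :=
  ∀ i : V, i ≠ s → ValidVal k (θ.val i)

/-- The reported (undirected) adjacency: `{i, j}` is an edge whenever
`j ∈ r'_i` (or symmetrically `i ∈ r'_j`). -/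
def Profile.adj {k : ℕ} (θ : Profile V k) (i j : V) : Prop :=
  j ∈ θ.nbr i ∨ i ∈ θ.nbr j

/-- The feasible set `F(θ', B)` of a coalition `B`: the buyers in `B` that are
connected to the seller `s` by a path of reported edges lying inside `B`
(empty if `s ∉ B`). -/
def Profile.feasible {k : ℕ} (θ : Profile V k) (s : V) (B : Set V) : Set V :=
  {i | i ≠ s ∧ i ∈ B ∧ s ∈ B ∧
    Relation.ReflTransGen (fun a b => θ.adj a b ∧ a ∈ B ∧ b ∈ B) s i}

/-- Updating agent `i`'s report in a profile. -/
def updateAgent [DecidableEq V] {k : ℕ} (θ : Profile V k) (i : V)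
    (v : ℕ → ℝ) (r : Set V) : Profile V k :=
  ⟨Function.update θ.val i v, Function.update θ.nbr i r⟩

/-- The profile `θ'_B` obtained by removing (setting to nil) the reports of
all agents outside the coalition `B`. -/
noncomputable def Profile.restrict {k : ℕ} (θ : Profile V k) (B : Set V) : Profile V k :=
  ⟨fun i q => if i ∈ B then θ.val i q else 0,
   fun i => if i ∈ B then θ.nbr i ∩ B else ∅⟩

section Homogeneous

variable [Fintype V] [DecidableEq V]

/-- Social welfare of an allocation `π` under reports `θ`. -/
def SW {k : ℕ} (θ : Profile V k) (s : V) (π : V → ℕ) : ℝ :=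
  ∑ i ∈ Finset.univ.erase s, θ.val i (π i)

/-- The allocations admissible for a coalition `B` with irrevocable prior
allocation `πhat`: at most `k` items in total are allocated (none to the
seller), only buyers in `F(θ, B)` receive items, and nobody receives fewer
items than in `πhat`. -/
def feasAllocs {k : ℕ} (θ : Profile V k) (s : V) (B : Set V) (πhat : V → ℕ) :
    Set (V → ℕ) :=
  {π | π s = 0 ∧ (∑ i ∈ Finset.univ.erase s, π i) ≤ k ∧
    (∀ i, i ∉ θ.feasible s B → π i = 0) ∧ ∀ j, j ≠ s → πhat j ≤ π j}

/-- `SW*(θ, B, πhat)`: the maximum social welfare over the admissible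
allocations for coalition `B` with prior allocation `πhat`. -/
noncomputable def SWstar {k : ℕ} (θ : Profile V k) (s : V) (B : Set V)
    (πhat : V → ℕ) : ℝ :=
  sSup (SW θ s '' feasAllocs θ s B πhat)

/-- A chosen allocation attaining `SW*(θ, B, πhat)`. -/
noncomputable def bestAlloc {k : ℕ} (θ : Profile V k) (s : V) (B : Set V)
    (πhat : V → ℕ) : V → ℕ :=
  Classical.epsilon fun π =>
    π ∈ feasAllocs θ s B πhat ∧ SW θ s π = SWstar θ s B πhat

/-- `o_{≺i}`: the set of agents strictly preceding `i` in the order `o`. -/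
def pred (o : V ≃ Fin (Fintype.card V)) (i : V) : Set V := {j | o j < o i}

/-- `o_{≼i} = o_{≺i} ∪ {i}`. -/
def predeq (o : V ≃ Fin (Fintype.card V)) (i : V) : Set V := {j | o j ≤ o i}

/-- The partial allocation produced by PDA after the first `t` agents of the
order `o` have been traversed: the seller is skipped, and each traversed buyer
`i` receives her share in a chosen allocation attaining
`SW*(θ, o_{≼i}, π^{o≺i})`, earlier allocations being irrevocable. -/
noncomputable def pdaStep {k : ℕ} (θ : Profile V k) (s : V)
    (o : V ≃ Fin (Fintype.card V)) : ℕ → V → ℕ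
  | 0 => fun _ => 0
  | t + 1 =>
    if h : t < Fintype.card V then
      let i := o.symm ⟨t, h⟩
      if i = s then pdaStep θ s o t
      else Function.update (pdaStep θ s o t) i
        (bestAlloc θ s (predeq o i) (pdaStep θ s o t) i)
    else pdaStep θ s o t

/-- `π^{o≺i}`: the allocation fixed by PDA right before agent `i` is traversed. -/
noncomputable def pdaPrior {k : ℕ} (θ : Profile V k) (s : V)
    (o : V ≃ Fin (Fintype.card V)) (i : V) : V → ℕ :=
  pdaStep θ s o (o i : ℕ)

/-- The final allocation `π^o` produced by PDA under the order `o`. -/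
noncomputable def pdaAlloc {k : ℕ} (θ : Profile V k) (s : V)
    (o : V ≃ Fin (Fintype.card V)) : V → ℕ :=
  pdaStep θ s o (Fintype.card V)

/-- The payment charged by PDA to agent `i` under the order `o`:
`p_i = SW*(θ, o_{≺i}, π^{o≺i}) − SW*(θ, o_{≼i}, π^{o≺i}) + v'_i(π_i)`, except
that agents traversed after all `k` items have been allocated pay `0`
(and the seller pays nothing). -/
noncomputable def pdaPay {k : ℕ} (θ : Profile V k) (s : V)
    (o : V ≃ Fin (Fintype.card V)) (i : V) : ℝ :=
  if i = s then 0
  else if (∑ j ∈ Finset.univ.erase s, pdaPrior θ s o i j) = k then 0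
  else SWstar θ s (pred o i) (pdaPrior θ s o i)
    - SWstar θ s (predeq o i) (pdaPrior θ s o i)
    + θ.val i (pdaAlloc θ s o i)

/-- `u_i^o`: the utility of buyer `i` with true valuation `v` under order `o`. -/
noncomputable def pdaUtil {k : ℕ} (v : ℕ → ℝ) (θ : Profile V k) (s : V)
    (o : V ≃ Fin (Fintype.card V)) (i : V) : ℝ :=
  v (pdaAlloc θ s o i) - pdaPay θ s o i

/-- `E_PDA(u_i)`: buyer `i`'s expected utility over the uniformly random order. -/
noncomputable def pdaExpUtil {k : ℕ} (v : ℕ → ℝ) (θ : Profile V k) (s : V)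
    (i : V) : ℝ :=
  (∑ o : V ≃ Fin (Fintype.card V), pdaUtil v θ s o i) /
    ((Fintype.card V).factorial : ℝ)

/-- `μ(θ)`: the fraction of orders for which PDA terminates with no item sold. -/
noncomputable def mu {k : ℕ} (θ : Profile V k) (s : V) : ℝ :=
  (Nat.card {o : V ≃ Fin (Fintype.card V) // ∀ j, pdaAlloc θ s o j = 0} : ℝ) /
    ((Fintype.card V).factorial : ℝ)

/-- The Shapley contribution `φ_i(θ)` of agent `i`. -/
noncomputable def shapley {k : ℕ} (θ : Profile V k) (s : V) (i : V) : ℝ :=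
  ∑ B ∈ (Finset.univ.erase i).powerset,
    ((B.card.factorial * (Fintype.card V - B.card - 1).factorial : ℝ) /
      ((Fintype.card V).factorial : ℝ)) *
    (SWstar θ s (↑(insert i B)) 0 - SWstar θ s (↑B) 0)

end Homogeneous

end DA

/-! Along an order `o`, let the potential after `t` agents be the optimal welfare of the agents
traversed so far, given the allocation PDA has already fixed, minus the welfare of that fixed
allocation. A buyer's payment is exactly the drop of the potential at her turn, because fixing her
share at its value in an optimal allocation does not change the optimum; the potential is `0`
until the seller is reached and jumps to `SW*(o_{≼s})` at her turn. Hence the revenue under `o` is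
`SW*(o_{≼s}) − (SW*(V, π^o) − SW(π^o))`. Averaging over orders, exactly `|B|! (n − |B| − 1)!`
orders place precisely the buyers of `B` before the seller, which produces the Shapley weights;
coalitions without the seller contribute `SW*(B) = 0`. -/

namespace DA

open Finset Function
open scoped Nat

section Allocations

variable {V : Type*} {k : ℕ} (θ : Profile V k) (s : V) {B B' : Set V}

lemma feasible_mono (h : B ⊆ B') : θ.feasible s B ⊆ θ.feasible s B' :=
  fun _ ⟨hi, hiB, hsB, hpath⟩ =>
    ⟨hi, h hiB, h hsB,
      Relation.ReflTransGen.mono (fun _ _ ⟨hadj, ha, hb⟩ => ⟨hadj, h ha, h hb⟩) _ _ hpath⟩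

variable [Fintype V] [DecidableEq V] {πhat π β : V → ℕ}

lemma feasAllocs_mono (h : B ⊆ B') (πhat : V → ℕ) :
    feasAllocs θ s B πhat ⊆ feasAllocs θ s B' πhat :=
  fun _ ⟨h0, hsum, hsupp, hle⟩ =>
    ⟨h0, hsum, fun i hi => hsupp i fun hmem => hi (feasible_mono θ s h hmem), hle⟩

lemma feasAllocs_finite (B : Set V) (πhat : V → ℕ) : (feasAllocs θ s B πhat).Finite := by
  refine (Set.Finite.pi fun _ => Set.finite_Iic k).subset fun π hπ i _ => ?_
  obtain ⟨h0, hsum, -, -⟩ := hπ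
  by_cases hi : i = s
  · simp [hi, h0]
  · exact (single_le_sum (fun j _ => Nat.zero_le (π j)) (mem_erase.2 ⟨hi, mem_univ i⟩)).trans hsum

lemma le_SWstar (h : π ∈ feasAllocs θ s B πhat) : SW θ s π ≤ SWstar θ s B πhat :=
  le_csSup ((feasAllocs_finite θ s B πhat).image _).bddAbove ⟨π, h, rfl⟩

lemma bestAlloc_spec (h : (feasAllocs θ s B πhat).Nonempty) :
    bestAlloc θ s B πhat ∈ feasAllocs θ s B πhat ∧
      SW θ s (bestAlloc θ s B πhat) = SWstar θ s B πhat := by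
  obtain ⟨π, hπ, hsw⟩ := (h.image (SW θ s)).csSup_mem ((feasAllocs_finite θ s B πhat).image _)
  exact Classical.epsilon_spec
    (p := fun π => π ∈ feasAllocs θ s B πhat ∧ SW θ s π = SWstar θ s B πhat) ⟨π, hπ, hsw⟩

lemma zero_mem_feasAllocs (B : Set V) : (0 : V → ℕ) ∈ feasAllocs θ s B 0 :=
  ⟨rfl, by simp, fun _ _ => rfl, fun _ _ => le_rfl⟩

variable {θ s}

lemma le_of_mem_feasAllocs (hβ : β ∈ feasAllocs θ s B πhat) (hs : πhat s = 0) : πhat ≤ β := by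
  intro j
  by_cases hj : j = s
  · simp [hj, hs]
  · exact hβ.2.2.2 j hj

lemma mem_feasAllocs_self_of_le (hβ : β ∈ feasAllocs θ s B πhat) (h : π ≤ β) :
    π ∈ feasAllocs θ s B π :=
  ⟨Nat.le_zero.1 (hβ.1 ▸ h s), (sum_le_sum fun j _ => h j).trans hβ.2.1,
    fun i hi => Nat.le_zero.1 (hβ.2.2.1 i hi ▸ h i), fun _ _ => le_rfl⟩

lemma eq_zero_of_mem_feasAllocs (hπ : π ∈ feasAllocs θ s B πhat) (hs : s ∉ B) : π = 0 :=
  funext fun i => hπ.2.2.1 i fun hi => hs hi.2.2.1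

lemma feasAllocs_eq_singleton_of_notMem (hπ : π ∈ feasAllocs θ s B π) (hs : s ∉ B) :
    feasAllocs θ s B π = {π} := by
  refine Set.eq_singleton_iff_unique_mem.2 ⟨hπ, fun m hm => ?_⟩
  rw [eq_zero_of_mem_feasAllocs hm hs, eq_zero_of_mem_feasAllocs hπ hs]

lemma feasAllocs_eq_singleton_of_sum_eq (hπ : π ∈ feasAllocs θ s B π)
    (hk : ∑ j ∈ univ.erase s, π j = k) : feasAllocs θ s B π = {π} := by
  refine Set.eq_singleton_iff_unique_mem.2 ⟨hπ, fun m hm => ?_⟩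
  have hle := le_of_mem_feasAllocs hm hπ.1
  have hsum : ∑ j ∈ univ.erase s, π j = ∑ j ∈ univ.erase s, m j :=
    le_antisymm (sum_le_sum fun j _ => hle j) (hk ▸ hm.2.1)
  funext j
  by_cases hj : j = s
  · rw [hj, hm.1, hπ.1]
  · exact ((sum_eq_sum_iff_of_le fun j _ => hle j).1 hsum j (mem_erase.2 ⟨hj, mem_univ j⟩)).symm

lemma SWstar_eq_of_feasAllocs_eq_singleton (h : feasAllocs θ s B πhat = {π}) :
    SWstar θ s B πhat = SW θ s π := by
  rw [SWstar, h, Set.image_singleton, csSup_singleton]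

lemma bestAlloc_eq_of_feasAllocs_eq_singleton (h : feasAllocs θ s B πhat = {π}) :
    bestAlloc θ s B πhat = π := by
  have hmem := (bestAlloc_spec θ s (h ▸ Set.singleton_nonempty π)).1
  rwa [h, Set.mem_singleton_iff] at hmem

lemma SWstar_update_bestAlloc (hπ : π ∈ feasAllocs θ s B π) (i : V) :
    SWstar θ s B (update π i (bestAlloc θ s B π i)) = SWstar θ s B π := by
  set β := bestAlloc θ s B π
  obtain ⟨hβ, hβsw⟩ := bestAlloc_spec θ s ⟨π, hπ⟩
  have hle : π ≤ β := le_of_mem_feasAllocs hβ hπ.1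
  have hβ' : β ∈ feasAllocs θ s B (update π i (β i)) :=
    ⟨hβ.1, hβ.2.1, hβ.2.2.1, fun j _ => update_le_iff.2 ⟨le_rfl, fun j _ => hle j⟩ j⟩
  have hsub : feasAllocs θ s B (update π i (β i)) ⊆ feasAllocs θ s B π :=
    fun m ⟨h0, hsum, hsupp, hlb⟩ =>
      ⟨h0, hsum, hsupp, fun j hj =>
        (le_update_iff.2 ⟨hle i, fun _ _ => le_rfl⟩ j).trans (hlb j hj)⟩
  refine le_antisymm ?_ (hβsw ▸ le_SWstar θ s hβ')
  exact csSup_le_csSup ((feasAllocs_finite θ s B π).image _).bddAbove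
    (Set.Nonempty.image _ ⟨β, hβ'⟩) (Set.image_mono hsub)

lemma SW_update {i : V} (hi : i ≠ s) (π : V → ℕ) (a : ℕ) :
    SW θ s (update π i a) = SW θ s π + θ.val i a - θ.val i (π i) := by
  have hmem : i ∈ univ.erase s := mem_erase.2 ⟨hi, mem_univ i⟩
  rw [SW, SW, ← add_sum_erase _ _ hmem, ← add_sum_erase _ _ hmem, update_self,
    sum_congr rfl fun j hj => by rw [update_of_ne (ne_of_mem_erase hj)]]
  ring

lemma SW_zero (hθ : θ.Valid s) : SW θ s 0 = 0 :=
  sum_eq_zero fun i hi => (hθ i (ne_of_mem_erase hi)).1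

end Allocations

section FirstAgents

variable {V : Type*} [Fintype V] (o : V ≃ Fin (Fintype.card V))

def firstAgents (t : ℕ) : Set V := {j | (o j : ℕ) < t}

lemma pred_eq_firstAgents (i : V) : pred o i = firstAgents o (o i) := rfl

lemma predeq_eq_firstAgents (i : V) : predeq o i = firstAgents o (o i + 1) :=
  Set.ext fun _ => Nat.lt_succ_iff.symm

lemma firstAgents_mono : Monotone (firstAgents o) := fun _ _ h _ hj => lt_of_lt_of_le hj h

lemma firstAgents_of_card_le {t : ℕ} (ht : Fintype.card V ≤ t) : firstAgents o t = Set.univ :=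
  Set.eq_univ_of_forall fun j => lt_of_lt_of_le (o j).isLt ht

end FirstAgents

section PDA

variable {V : Type*} [Fintype V] [DecidableEq V] {k : ℕ} (θ : Profile V k) (s : V)
  (o : V ≃ Fin (Fintype.card V))

lemma pdaStep_succ_of_card_le {t : ℕ} (ht : Fintype.card V ≤ t) :
    pdaStep θ s o (t + 1) = pdaStep θ s o t := by
  rw [pdaStep, dif_neg (not_lt.2 ht)]

lemma pdaStep_succ_self (i : V) :
    pdaStep θ s o (o i + 1) = if i = s then pdaStep θ s o (o i) else
      update (pdaStep θ s o (o i)) i (bestAlloc θ s (predeq o i) (pdaStep θ s o (o i)) i) := by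
  rw [pdaStep, dif_pos (o i).isLt]
  simp only [Fin.eta, Equiv.symm_apply_apply]

lemma pdaStep_mem_feasAllocs (t : ℕ) :
    pdaStep θ s o t ∈ feasAllocs θ s (firstAgents o t) (pdaStep θ s o t) := by
  induction t with
  | zero => exact zero_mem_feasAllocs θ s _
  | succ t ih =>
    have ih' := feasAllocs_mono θ s (firstAgents_mono o t.le_succ) _ ih
    by_cases ht : t < Fintype.card V
    · obtain ⟨i, rfl⟩ : ∃ i, (o i : ℕ) = t := ⟨o.symm ⟨t, ht⟩, by simp⟩
      rw [pdaStep_succ_self]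
      split_ifs with his
      · exact ih'
      · rw [← predeq_eq_firstAgents] at ih' ⊢
        have hβ := (bestAlloc_spec θ s ⟨_, ih'⟩).1
        exact mem_feasAllocs_self_of_le hβ
          (update_le_iff.2 ⟨le_rfl, fun j _ => le_of_mem_feasAllocs hβ ih.1 j⟩)
    · rwa [pdaStep_succ_of_card_le θ s o (not_lt.1 ht)]

lemma pdaStep_apply_of_lt {j : V} {t t' : ℕ} (hj : (o j : ℕ) < t) (ht : t ≤ t') :
    pdaStep θ s o t' j = pdaStep θ s o t j := by
  induction t', ht using Nat.le_induction with
  | base => rfl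
  | succ t' ht ih =>
    by_cases ht' : t' < Fintype.card V
    · obtain ⟨i, rfl⟩ : ∃ i, (o i : ℕ) = t' := ⟨o.symm ⟨t', ht'⟩, by simp⟩
      have hji : j ≠ i := by rintro rfl; omega
      rw [pdaStep_succ_self]
      split_ifs
      · exact ih
      · rw [update_of_ne hji, ih]
    · rw [pdaStep_succ_of_card_le θ s o (not_lt.1 ht'), ih]

lemma pdaAlloc_apply (i : V) : pdaAlloc θ s o i = pdaStep θ s o (o i + 1) i :=
  pdaStep_apply_of_lt θ s o (Nat.lt_succ_self _) (o i).isLt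

lemma pdaStep_self (i : V) : pdaStep θ s o (o i) i = 0 :=
  (pdaStep_mem_feasAllocs θ s o _).2.2.1 i fun hi => lt_irrefl (o i : ℕ) hi.2.1

variable {θ s}

/-- The cutoff once all items are sold is harmless: the payment formula gives `0` there anyway. -/
lemma pdaPay_of_ne (hθ : θ.Valid s) {i : V} (hi : i ≠ s) :
    pdaPay θ s o i = SWstar θ s (pred o i) (pdaPrior θ s o i)
      - SWstar θ s (predeq o i) (pdaPrior θ s o i) + θ.val i (pdaAlloc θ s o i) := by
  rw [pdaPay, if_neg hi, pdaPrior]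
  split_ifs with hfull
  · set π := pdaStep θ s o (o i)
    have hπ : π ∈ feasAllocs θ s (firstAgents o (o i)) π := pdaStep_mem_feasAllocs θ s o _
    have hπ' : π ∈ feasAllocs θ s (firstAgents o (o i + 1)) π :=
      feasAllocs_mono θ s (firstAgents_mono o (o i : ℕ).le_succ) _ hπ
    have hsingle := feasAllocs_eq_singleton_of_sum_eq hπ hfull
    have hsingle' := feasAllocs_eq_singleton_of_sum_eq hπ' hfull
    have hπi : π i = 0 := pdaStep_self θ s o i
    rw [pdaAlloc_apply, pdaStep_succ_self, if_neg hi, update_self, pred_eq_firstAgents,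
      predeq_eq_firstAgents, bestAlloc_eq_of_feasAllocs_eq_singleton hsingle',
      SWstar_eq_of_feasAllocs_eq_singleton hsingle, SWstar_eq_of_feasAllocs_eq_singleton hsingle',
      hπi, (hθ i hi).1]
    ring
  · rfl

variable (θ s)

noncomputable def pdaPotential (t : ℕ) : ℝ :=
  SWstar θ s (firstAgents o t) (pdaStep θ s o t) - SW θ s (pdaStep θ s o t)

lemma pdaPotential_eq_zero_of_le {t : ℕ} (ht : t ≤ o s) : pdaPotential θ s o t = 0 := by
  have hs : s ∉ firstAgents o t := fun h => absurd h (not_lt.2 ht)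
  rw [pdaPotential, SWstar_eq_of_feasAllocs_eq_singleton
    (feasAllocs_eq_singleton_of_notMem (pdaStep_mem_feasAllocs θ s o t) hs), sub_self]

variable {θ s}

lemma pdaPay_add_pdaPotential (hθ : θ.Valid s) (i : V) :
    pdaPay θ s o i + pdaPotential θ s o (o i + 1)
      = pdaPotential θ s o (o i) + if i = s then SWstar θ s (predeq o s) 0 else 0 := by
  by_cases hi : i = s
  · subst i
    have h0 : pdaStep θ s o (o s) = 0 :=
      eq_zero_of_mem_feasAllocs (pdaStep_mem_feasAllocs θ s o _) (lt_irrefl (o s : ℕ))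
    rw [pdaPay, if_pos rfl, if_pos rfl, pdaPotential_eq_zero_of_le θ s o le_rfl, pdaPotential,
      pdaStep_succ_self, if_pos rfl, h0, ← predeq_eq_firstAgents, SW_zero hθ]
    ring
  · rw [pdaPay_of_ne o hθ hi, pdaPrior, pred_eq_firstAgents, pdaPotential, pdaPotential,
      pdaAlloc_apply, pdaStep_succ_self, if_neg hi, if_neg hi, update_self,
      ← predeq_eq_firstAgents]
    have hπ := pdaStep_mem_feasAllocs θ s o (o i)
    have hπi := pdaStep_self θ s o i
    generalize pdaStep θ s o (o i) = π at hπ hπi ⊢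
    have hπ' : π ∈ feasAllocs θ s (predeq o i) π := by
      rw [predeq_eq_firstAgents]
      exact feasAllocs_mono θ s (firstAgents_mono o (o i : ℕ).le_succ) _ hπ
    rw [SWstar_update_bestAlloc hπ', SW_update hi, hπi, (hθ i hi).1]
    ring

lemma sum_pdaPay (hθ : θ.Valid s) :
    ∑ i ∈ univ.erase s, pdaPay θ s o i = SWstar θ s (predeq o s) 0
      - (SWstar θ s Set.univ (pdaAlloc θ s o) - SW θ s (pdaAlloc θ s o)) := by
  set Φ := pdaPotential θ s o with hΦ
  calc ∑ i ∈ univ.erase s, pdaPay θ s o i = ∑ i, pdaPay θ s o i :=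
        sum_erase _ (by rw [pdaPay, if_pos rfl])
    _ = ∑ i, (Φ (o i) - Φ (o i + 1) + if i = s then SWstar θ s (predeq o s) 0 else 0) :=
        sum_congr rfl fun i _ => by linarith [pdaPay_add_pdaPotential o hθ i]
    _ = Φ 0 - Φ (Fintype.card V) + SWstar θ s (predeq o s) 0 := by
        rw [sum_add_distrib, sum_ite_eq', if_pos (mem_univ s),
          Equiv.sum_comp o fun t => Φ t - Φ (t + 1),
          Fin.sum_univ_eq_sum_range (fun t => Φ t - Φ (t + 1)), sum_range_sub']
    _ = _ := by
        rw [hΦ, pdaPotential_eq_zero_of_le θ s o (Nat.zero_le _), pdaPotential,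
          firstAgents_of_card_le o le_rfl, pdaAlloc]
        ring

end PDA

section Counting

variable {α β γ : Type*}

def fiberwiseEquivEquivPi (g : α → γ) (F : β → γ) :
    {e : α ≃ β // ∀ a, F (e a) = g a} ≃ ∀ c, ({a // g a = c} ≃ {b // F b = c}) where
  toFun e c := e.1.subtypeEquiv fun a => by rw [e.2 a]
  invFun e := ⟨Equiv.ofFiberEquiv e, Equiv.ofFiberEquiv_map e⟩
  left_inv e := by ext a; rfl
  right_inv e := by funext c; ext ⟨a, rfl⟩; rfl

lemma card_fiberwiseEquiv [Fintype α] [DecidableEq α] [Fintype β] [DecidableEq β] [Fintype γ]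
    [DecidableEq γ] (g : α → γ) (F : β → γ)
    (h : ∀ c, Fintype.card {a // g a = c} = Fintype.card {b // F b = c}) :
    Fintype.card {e : α ≃ β // ∀ a, F (e a) = g a} = ∏ c, (Fintype.card {a // g a = c})! := by
  rw [Fintype.card_congr (fiberwiseEquivEquivPi g F), Fintype.card_pi]
  exact prod_congr rfl fun c _ => Fintype.card_equiv (Fintype.equivOfCardEq (h c))

end Counting

section RandomOrder

variable {V : Type*} [Fintype V] (o : V ≃ Fin (Fintype.card V)) (s : V)

def predecessors : Finset V := univ.filter fun j => o j < o s

lemma card_predecessors : #(predecessors o s) = o s := by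
  rw [predecessors, ← Fin.card_Iio (o s)]
  exact card_equiv o fun j => by simp

variable [DecidableEq V]

lemma coe_insert_predecessors : (↑(insert s (predecessors o s)) : Set V) = predeq o s := by
  ext j
  simp [predecessors, predeq, le_iff_eq_or_lt]

def orderBlock (B : Finset V) (j : V) : Ordering :=
  if j ∈ B then .lt else if j = s then .eq else .gt

variable {o s}

lemma predecessors_eq_iff {B : Finset V} (hsB : s ∉ B) :
    predecessors o s = B ↔ ∀ j, compare (o j : ℕ) #B = orderBlock s B j := by
  constructor
  · rintro rfl j
    rw [card_predecessors, orderBlock]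
    split_ifs with hjB hjs
    · exact compare_lt_iff_lt.2 (by simpa [predecessors] using hjB)
    · simp [hjs]
    · refine compare_gt_iff_gt.2 (lt_of_le_of_ne ?_ ?_)
      · simpa [predecessors] using hjB
      · exact fun h => hjs (o.injective (Fin.ext h.symm))
  · intro h
    have hs : (o s : ℕ) = #B := by simpa [orderBlock, hsB] using h s
    ext j
    have hj := h j
    simp only [predecessors, mem_filter, mem_univ, true_and, Fin.lt_def, hs]
    unfold orderBlock at hj
    split_ifs at hj with hjB hjs
    · simpa [hjB] using compare_lt_iff_lt.1 hj
    · simp [hjB, compare_eq_iff_eq.1 hj]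
    · simpa [hjB] using (compare_gt_iff_gt.1 hj).le

lemma card_predecessors_eq {B : Finset V} (hsB : s ∉ B) :
    #(univ.filter fun o : V ≃ Fin (Fintype.card V) => predecessors o s = B)
      = (#B)! * (Fintype.card V - #B - 1)! := by
  set n := Fintype.card V
  have hB : #B < n := card_lt_univ_of_notMem hsB
  have hlt : #(univ.filter fun j => orderBlock s B j = .lt) = #B := by
    congr 1; ext j; by_cases j ∈ B <;> by_cases j = s <;> simp_all [orderBlock]
  have heq : #(univ.filter fun j => orderBlock s B j = .eq) = 1 := by
    rw [card_eq_one]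
    exact ⟨s, by ext j; by_cases j ∈ B <;> by_cases j = s <;> simp_all [orderBlock]⟩
  have hgt : #(univ.filter fun j => orderBlock s B j = .gt) = n - #B - 1 := by
    rw [show univ.filter (fun j => orderBlock s B j = .gt) = (insert s B)ᶜ by
      ext j; by_cases j ∈ B <;> by_cases j = s <;> simp_all [orderBlock],
      card_compl, card_insert_of_notMem hsB, Nat.sub_sub]
  have hfiber : ∀ c, Fintype.card {j // orderBlock s B j = c}
      = Fintype.card {m : Fin n // compare (m : ℕ) #B = c} := by
    intro c
    simp only [Fintype.card_subtype]
    cases c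
    · rw [hlt]; simp [compare_lt_iff_lt, Fin.card_filter_val_lt, hB.le]
    · rw [heq, eq_comm, card_eq_one]; exact ⟨⟨#B, hB⟩, by ext; simp [Fin.ext_iff]⟩
    · rw [hgt, show univ.filter (fun m : Fin n => compare (m : ℕ) #B = .gt) = Ioi ⟨#B, hB⟩ by
        ext; simp [compare_gt_iff_gt, Fin.lt_def], Fin.card_Ioi, Nat.sub_right_comm]
  calc #(univ.filter fun o : V ≃ Fin n => predecessors o s = B)
      = Fintype.card {o : V ≃ Fin n // ∀ j, compare (o j : ℕ) #B = orderBlock s B j} := by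
        rw [Fintype.card_subtype]
        exact congr_arg card (filter_congr fun o _ => predecessors_eq_iff hsB)
    _ = ∏ c, (Fintype.card {j // orderBlock s B j = c})! := card_fiberwiseEquiv _ _ hfiber
    _ = (#B)! * (n - #B - 1)! := by
        rw [show (univ : Finset Ordering) = {.lt, .eq, .gt} from rfl]
        simp [Fintype.card_subtype, hlt, heq, hgt]

/-- The random-order form of the Shapley weights. -/
theorem sum_predecessors {M : Type*} [AddCommMonoid M] (f : Finset V → M) :
    ∑ o : V ≃ Fin (Fintype.card V), f (predecessors o s)
      = ∑ B ∈ (univ.erase s).powerset, ((#B)! * (Fintype.card V - #B - 1)!) • f B := by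
  have hmaps : ∀ o ∈ (univ : Finset (V ≃ Fin (Fintype.card V))),
      predecessors o s ∈ (univ.erase s).powerset := fun o _ =>
    mem_powerset.2 fun j hj => mem_erase.2 ⟨fun h => by simp [predecessors, h] at hj, mem_univ j⟩
  rw [← sum_fiberwise_of_maps_to' hmaps]
  refine sum_congr rfl fun B hB => ?_
  have hsB : s ∉ B := fun h => (mem_erase.1 (mem_powerset.1 hB h)).1 rfl
  rw [sum_const, card_predecessors_eq hsB]

end RandomOrder

lemma sum_SWstar_predeq_div_factorial {V : Type*} [Fintype V] [DecidableEq V] {k : ℕ}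
    {θ : Profile V k} {s : V} (hθ : θ.Valid s) :
    (∑ o : V ≃ Fin (Fintype.card V), SWstar θ s (predeq o s) 0) / (Fintype.card V)!
      = shapley θ s s := by
  simp_rw [← coe_insert_predecessors]
  rw [sum_predecessors (s := s) fun B => SWstar θ s ↑(insert s B) 0, shapley, sum_div]
  refine sum_congr rfl fun B hB => ?_
  have hsB : s ∉ (B : Set V) := fun h => (mem_erase.1 (mem_powerset.1 hB h)).1 rfl
  rw [SWstar_eq_of_feasAllocs_eq_singleton
    (feasAllocs_eq_singleton_of_notMem (zero_mem_feasAllocs θ s _) hsB), SW_zero hθ, sub_zero,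
    nsmul_eq_mul]
  push_cast
  ring

end DA

theorem pda_expected_revenue_general {V : Type*} [Fintype V] [DecidableEq V]
    {k : ℕ} (θ : DA.Profile V k) (s : V) (hθ : θ.Valid s) :
    (∑ o : V ≃ Fin (Fintype.card V),
        ∑ i ∈ Finset.univ.erase s, DA.pdaPay θ s o i) /
      ((Fintype.card V).factorial : ℝ)
    = DA.shapley θ s s
      - (∑ o : V ≃ Fin (Fintype.card V),
          (DA.SWstar θ s Set.univ (DA.pdaAlloc θ s o)
            - DA.SW θ s (DA.pdaAlloc θ s o))) /
        ((Fintype.card V).factorial : ℝ) := by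
  rw [Finset.sum_congr rfl fun o _ => DA.sum_pdaPay o hθ, Finset.sum_sub_distrib, sub_div,
    DA.sum_SWstar_predeq_div_factorial hθ]

/-- For any report profile θ', the expected revenue of PDA over
the uniformly random order equals the seller's Shapley contribution minus the
expected welfare loss from unsold items:
E_PDA(Rev(θ')) = φ_s(θ') − (1/|O(V)|) Σ_o (SW*(θ', V, π^o) − SW(θ', π^o)). -/
theorem pda_expected_revenue {V : Type*} [Fintype V] [DecidableEq V]
    {k : ℕ} (hk : 1 ≤ k) (θ : DA.Profile V k) (s : V) (hθ : θ.Valid s) :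
    (∑ o : V ≃ Fin (Fintype.card V),
        ∑ i ∈ Finset.univ.erase s, DA.pdaPay θ s o i) /
      ((Fintype.card V).factorial : ℝ)
    = DA.shapley θ s s
      - (∑ o : V ≃ Fin (Fintype.card V),
          (DA.SWstar θ s Set.univ (DA.pdaAlloc θ s o)
            - DA.SW θ s (DA.pdaAlloc θ s o))) /
        ((Fintype.card V).factorial : ℝ) :=
  pda_expected_revenue_general θ s hθ
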